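/- Let H be a Hopf algebra over ℂ and φ: H → ℂ a right integral (i.e., Σ φ(x₁)x₂ = φ(x)1 for all x). Then ω(x, y) := φ(S(x)y) is a Fourier form on H. Conversely, if ω is a Fourier form on H, then x ↦ ω(1, x) is a right integral on H. -/

import Mathlib

open TensorProduct Coalgebra HopfAlgebra

variable {H : Type*} [Ring H] [HopfAlgebra ℂ H]

/-- `ω` is a Fourier form: `Σ ω(c, d₁) d₂ = Σ c₁ ω(c₂, d)` for all `c, d`. -/
def IsFourierForm (ω : H →ₗ[ℂ] H →ₗ[ℂ] ℂ) : Prop :=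
  ∀ c d : H,
    TensorProduct.lid ℂ H ((LinearMap.rTensor H (ω c)) (Coalgebra.comul (R := ℂ) d)) =
    TensorProduct.rid ℂ H ((LinearMap.lTensor H (ω.flip d)) (Coalgebra.comul (R := ℂ) c))

/-- `φ` is a right integral: `Σ φ(x₁) x₂ = φ(x) 1`. -/
def IsRightIntegral (φ : H →ₗ[ℂ] ℂ) : Prop :=
  ∀ x : H,
    TensorProduct.lid ℂ H ((LinearMap.rTensor H φ) (Coalgebra.comul (R := ℂ) x)) = φ x • 1

/-- The bilinear form `ω(x, y) = φ(S(x) y)` attached to a functional `φ`. -/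
noncomputable def intForm (φ : H →ₗ[ℂ] ℂ) : H →ₗ[ℂ] H →ₗ[ℂ] ℂ :=
  LinearMap.mk₂ ℂ (fun x y => φ (antipode (R := ℂ) x * y))
    (fun x x' y => by simp [map_add, add_mul])
    (fun a x y => by simp [map_smul, smul_mul_assoc])
    (fun x y y' => by simp [mul_add])
    (fun a x y => by simp [mul_smul_comm])

/-!
For a right integral `φ`, write `Σ φ(S(c) d₁) d₂ = (φ ⊗ id)((S c ⊗ 1) Δd)` and insert
`S c ⊗ 1 = Σ (1 ⊗ c₁) Δ(S c₂)`. Since `Δ` is multiplicative, the summands become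
`c₁ · (φ ⊗ id) Δ(S(c₂) d) = φ(S(c₂) d) c₁`, which is the Fourier identity. The inserted identity
says `ι₂ * (Δ ∘ S) = ι₁ ∘ S` in the convolution algebra of linear maps `H → H ⊗ H`; it holds because
`ι₁ ∘ S` is a left convolution inverse of `ι₁`, `ι₁ * ι₂ = Δ`, and `Δ ∘ S` is a right convolution
inverse of `Δ`. Conversely, `Δ1 = 1 ⊗ 1` turns the Fourier identity at `c = 1` into the defining
identity of a right integral for `ω(1, ·)`.
-/

open WithConv

theorem TensorProduct.lid_rTensor_tmul_mul {R A B : Type*} [CommSemiring R] [Semiring A]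
    [Algebra R A] [Semiring B] [Algebra R B] (φ : A →ₗ[R] R) (x : A) (b : B) (w : A ⊗[R] B) :
    TensorProduct.lid R B (φ.rTensor B ((x ⊗ₜ b) * w)) =
      b * TensorProduct.lid R B ((φ ∘ₗ LinearMap.mulLeft R x).rTensor B w) := by
  induction w using TensorProduct.induction_on with
  | zero => simp
  | tmul y c => simp
  | add w w' hw hw' => simp [mul_add, hw, hw']

section Convolution

variable {R A : Type*} [CommSemiring R] [Semiring A]

local notation "ι₁" => AlgHom.toLinearMap (Algebra.TensorProduct.includeLeft : A →ₐ[R] A ⊗[R] A)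
local notation "ι₂" => AlgHom.toLinearMap (Algebra.TensorProduct.includeRight : A →ₐ[R] A ⊗[R] A)
local notation "𝑺" => antipode R (A := A)

theorem Coalgebra.includeLeft_convMul_includeRight [Algebra R A] [Coalgebra R A] :
    toConv ι₁ * toConv ι₂ = toConv (comul (R := R) (A := A)) := by
  ext a
  rw [(ℛ R a).convMul_apply, ← (ℛ R a).eq]
  simp

variable [HopfAlgebra R A]

theorem HopfAlgebra.includeLeft_comp_antipode_convMul_includeLeft :
    toConv (ι₁ ∘ₗ 𝑺) * toConv ι₁ = 1 := by
  apply WithConv.ofConv_injective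
  rw [← LinearMap.algHom_comp_convOne Algebra.TensorProduct.includeLeft,
    ← LinearMap.antipode_mul_id, LinearMap.algHom_comp_convMul_distrib]
  rfl

theorem HopfAlgebra.includeRight_convMul_comul_comp_antipode :
    toConv ι₂ * toConv (comul ∘ₗ 𝑺) = toConv (ι₁ ∘ₗ 𝑺) := calc
  _ = toConv (ι₁ ∘ₗ 𝑺) * (toConv ι₁ * toConv ι₂) * toConv (comul ∘ₗ 𝑺) := by
    rw [← mul_assoc (toConv _), includeLeft_comp_antipode_convMul_includeLeft, one_mul]
  _ = toConv (ι₁ ∘ₗ 𝑺) * (toConv comul * toConv (comul ∘ₗ 𝑺)) := by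
    rw [Coalgebra.includeLeft_convMul_includeRight, mul_assoc]
  _ = toConv (ι₁ ∘ₗ 𝑺) := by rw [LinearMap.comul_right_inv, mul_one]

theorem HopfAlgebra.sum_tmul_mul_comul_antipode {a : A} {ι : Type*} (𝓡 : Coalgebra.Repr R a ι) :
    ∑ i ∈ 𝓡.index, ((1 : A) ⊗ₜ[R] 𝓡.left i) * comul (𝑺 (𝓡.right i)) = 𝑺 a ⊗ₜ[R] 1 := by
  simpa [𝓡.convMul_apply] using congr($(includeRight_convMul_comul_comp_antipode (R := R)) a)

end Convolution

theorem IsRightIntegral.isFourierForm_intForm {φ : H →ₗ[ℂ] ℂ} (hφ : IsRightIntegral φ) :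
    IsFourierForm (intForm φ) := by
  intro c d
  let 𝓡 := ℛ ℂ c
  calc TensorProduct.lid ℂ H ((intForm φ c).rTensor H (comul d))
      = TensorProduct.lid ℂ H (φ.rTensor H ((antipode ℂ c ⊗ₜ 1) * comul d)) := by
        rw [TensorProduct.lid_rTensor_tmul_mul, one_mul]; rfl
    _ = ∑ i ∈ 𝓡.index, 𝓡.left i * TensorProduct.lid ℂ H
          (φ.rTensor H (comul (antipode ℂ (𝓡.right i) * d))) := by
        simp only [← sum_tmul_mul_comul_antipode 𝓡, Finset.sum_mul, map_sum, mul_assoc,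
          TensorProduct.lid_rTensor_tmul_mul, LinearMap.mulLeft_one, LinearMap.comp_id,
          ← Bialgebra.comul_mul]
    _ = ∑ i ∈ 𝓡.index, φ (antipode ℂ (𝓡.right i) * d) • 𝓡.left i :=
        Finset.sum_congr rfl fun i _ => by rw [hφ, mul_smul_comm, mul_one]
    _ = TensorProduct.rid ℂ H (((intForm φ).flip d).lTensor H (comul c)) := by
        simp [← 𝓡.eq, intForm]

theorem IsFourierForm.isRightIntegral_apply_one {ω : H →ₗ[ℂ] H →ₗ[ℂ] ℂ} (hω : IsFourierForm ω) :
    IsRightIntegral (ω 1) := fun x => by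
  simpa [Algebra.TensorProduct.one_def] using hω 1 x

/-- if `φ` is a right integral then `ω(x,y) = φ(S(x)y)` is a Fourier form;
conversely if `ω` is a Fourier form then `x ↦ ω(1, x)` is a right integral. -/
theorem integral_fourierForm_correspondence :
    (∀ φ : H →ₗ[ℂ] ℂ, IsRightIntegral φ → IsFourierForm (intForm φ)) ∧
    (∀ ω : H →ₗ[ℂ] H →ₗ[ℂ] ℂ, IsFourierForm ω → IsRightIntegral (ω 1)) :=
  ⟨fun _ hφ => hφ.isFourierForm_intForm, fun _ hω => hω.isRightIntegral_apply_one⟩
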